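/- Let D be a combinatorial link diagram with strand set S, and suppose D is k-meridionally colorable via a sequence of coloring moves (A₀,f₀)→(A₁,f₁)→⋯→(A_m,f_m) (where m = n − k and A_m = S). Then for every color j ∈ {1,…,k} and every stage δ ∈ {0,1,…,m}, the set f_δ^{-1}(j) of strands carrying color j at stage δ is connected under the adjacency relation. -/

import Mathlib

/-- A combinatorial link diagram: `n` strands and `n` crossings; each crossing has an
(unordered, here recorded as ordered) pair of understrands and an overstrand; every
strand occurs as an understrand of exactly two crossings, counted with multiplicity. -/
structure LinkDiagram where
  n : ℕ
  Strand : Type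
  Crossing : Type
  [strandFintype : Fintype Strand]
  [strandDecEq : DecidableEq Strand]
  [crossingFintype : Fintype Crossing]
  card_strand : Fintype.card Strand = n
  card_crossing : Fintype.card Crossing = n
  under1 : Crossing → Strand
  under2 : Crossing → Strand
  overstrand : Crossing → Strand
  under_twice : ∀ s : Strand,
    Nat.card {c : Crossing // under1 c = s} + Nat.card {c : Crossing // under2 c = s} = 2

attribute [instance] LinkDiagram.strandFintype LinkDiagram.strandDecEq
  LinkDiagram.crossingFintype

namespace LinkDiagram

/-- Two strands are adjacent if they are the two understrands of a common crossing. -/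
def Adj (D : LinkDiagram) (s t : D.Strand) : Prop :=
  ∃ c : D.Crossing, (D.under1 c = s ∧ D.under2 c = t) ∨ (D.under1 c = t ∧ D.under2 c = s)

/-- A subset `B` of the strands is connected if any two of its elements are joined by a
path of adjacent strands lying within `B`. -/
def ConnectedIn (D : LinkDiagram) (B : Set D.Strand) : Prop :=
  ∀ s ∈ B, ∀ t ∈ B,
    Relation.ReflTransGen (fun a b => a ∈ B ∧ b ∈ B ∧ D.Adj a b) s t

/-- The connected component (under adjacency) of the strand `s`. -/
def component (D : LinkDiagram) (s : D.Strand) : Set D.Strand :=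
  {t | Relation.ReflTransGen D.Adj s t}

/-- A witness that `D` is `k`-meridionally colorable: `k` distinct seed strands, partial
colorings `f i` at each stage `i = 0, …, n-k` (a strand not yet colored has value `none`),
where stage `0` colors the seed `j` with color `j` and nothing else, and each stage
`i → i+1` is a coloring move assigning a color to the single new strand `newStrand i`:
it is an understrand at a crossing whose other understrand and overstrand are already
colored, and it receives the color of the other understrand.  At the final stage
`n - k`, every strand is colored. -/
structure ColoringProcess (D : LinkDiagram) (k : ℕ) where
  seed : Fin k → D.Strand
  seed_inj : Function.Injective seed
  f : ℕ → D.Strand → Option (Fin k)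
  newStrand : ℕ → D.Strand
  f0_seed : ∀ j : Fin k, f 0 (seed j) = some j
  f0_none : ∀ s : D.Strand, (∀ j : Fin k, seed j ≠ s) → f 0 s = none
  move_none : ∀ i < D.n - k, f i (newStrand i) = none
  move_eq : ∀ i < D.n - k, ∀ s : D.Strand, s ≠ newStrand i → f (i + 1) s = f i s
  move_adj : ∀ i < D.n - k, ∃ c : D.Crossing, ∃ si : D.Strand,
      ((D.under1 c = newStrand i ∧ D.under2 c = si) ∨
        (D.under1 c = si ∧ D.under2 c = newStrand i)) ∧
      (f i si).isSome ∧ (f i (D.overstrand c)).isSome ∧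
      f (i + 1) (newStrand i) = f i si
  final : ∀ s : D.Strand, (f (D.n - k) s).isSome

/-- The final coloring of a coloring process. -/
def ColoringProcess.final' {D : LinkDiagram} {k : ℕ} (p : ColoringProcess D k) :
    D.Strand → Option (Fin k) :=
  p.f (D.n - k)

/-- `h` is the height function of the coloring sequence associated to the process `p`:
the `j`-th seed (j = 1, …, k) has height `-j`, and the strand colored by the `i`-th
coloring move has height `-(k + i)`. -/
def IsHeightFunction {D : LinkDiagram} {k : ℕ} (p : ColoringProcess D k)
    (h : D.Strand → ℤ) : Prop :=
  (∀ j : Fin k, h (p.seed j) = -((j : ℕ) + 1 : ℤ)) ∧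
  (∀ i < D.n - k, h (p.newStrand i) = -((k : ℤ) + (i : ℕ) + 1))

end LinkDiagram

/-! A colour class starts out as a single seed strand, and a coloring move enlarges at most
one class, by a strand that is adjacent (at the crossing used by the move) to a strand
already carrying that colour. Adding a strand adjacent to a connected set keeps it
connected, so by induction every colour class stays connected at every stage. -/

namespace LinkDiagram

variable {D : LinkDiagram}

theorem Adj.symm {s t : D.Strand} (h : D.Adj s t) : D.Adj t s :=
  let ⟨c, hc⟩ := h
  ⟨c, hc.symm⟩

theorem connectedIn_of_forall_reflTransGen {B : Set D.Strand} {t : D.Strand}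
    (h : ∀ s ∈ B, Relation.ReflTransGen (fun a b => a ∈ B ∧ b ∈ B ∧ D.Adj a b) s t) :
    D.ConnectedIn B := by
  have : Std.Symm (fun a b => a ∈ B ∧ b ∈ B ∧ D.Adj a b) :=
    ⟨fun _ _ ⟨ha, hb, hab⟩ => ⟨hb, ha, hab.symm⟩⟩
  intro a ha b hb
  exact (h a ha).trans (symm (h b hb))

theorem connectedIn_singleton (s : D.Strand) : D.ConnectedIn {s} := by
  rintro a rfl b rfl
  rfl

theorem ConnectedIn.insert {B : Set D.Strand} {s t : D.Strand} (hB : D.ConnectedIn B)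
    (ht : t ∈ B) (hst : D.Adj s t) : D.ConnectedIn (insert s B) := by
  refine connectedIn_of_forall_reflTransGen (t := t) ?_
  rintro u (rfl | hu)
  · exact .single ⟨Set.mem_insert _ _, Set.mem_insert_of_mem _ ht, hst⟩
  · exact Relation.ReflTransGen.mono (fun _ _ hab =>
      ⟨Set.mem_insert_of_mem _ hab.1, Set.mem_insert_of_mem _ hab.2.1, hab.2.2⟩) _ _
      (hB u hu t ht)

namespace ColoringProcess

variable {k : ℕ} (p : ColoringProcess D k)

def colorClass (i : ℕ) (j : Fin k) : Set D.Strand :=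
  {s | p.f i s = some j}

theorem colorClass_zero (j : Fin k) : p.colorClass 0 j = {p.seed j} := by
  ext s
  refine ⟨fun hs => ?_, fun hs => hs ▸ p.f0_seed j⟩
  by_cases hseed : ∃ j', p.seed j' = s
  · obtain ⟨j', rfl⟩ := hseed
    have hj : some j' = some j := (p.f0_seed j').symm.trans hs
    rw [Option.some_inj.mp hj]
    rfl
  · exact absurd (p.f0_none s fun j' h => hseed ⟨j', h⟩) (hs ▸ Option.some_ne_none j)

variable {p} {i : ℕ}

theorem colorClass_subset_succ (hi : i < D.n - k) (j : Fin k) :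
    p.colorClass i j ⊆ p.colorClass (i + 1) j := by
  intro s hs
  have hne : s ≠ p.newStrand i := by
    rintro rfl
    exact Option.some_ne_none j (hs.symm.trans (p.move_none i hi))
  exact (p.move_eq i hi s hne).trans hs

theorem colorClass_succ_subset (hi : i < D.n - k) (j : Fin k) :
    p.colorClass (i + 1) j ⊆ insert (p.newStrand i) (p.colorClass i j) := by
  intro s hs
  by_cases hne : s = p.newStrand i
  · exact Or.inl hne
  · exact Or.inr ((p.move_eq i hi s hne).symm.trans hs)

theorem exists_adj_newStrand (hi : i < D.n - k) :
    ∃ t, D.Adj (p.newStrand i) t ∧ p.f i t = p.f (i + 1) (p.newStrand i) := by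
  obtain ⟨c, t, hc, -, -, hcolor⟩ := p.move_adj i hi
  exact ⟨t, ⟨c, hc⟩, hcolor.symm⟩

theorem connectedIn_colorClass_succ (hi : i < D.n - k) {j : Fin k}
    (h : D.ConnectedIn (p.colorClass i j)) : D.ConnectedIn (p.colorClass (i + 1) j) := by
  by_cases hnew : p.newStrand i ∈ p.colorClass (i + 1) j
  · obtain ⟨t, hadj, ht⟩ := exists_adj_newStrand hi
    have hclass : p.colorClass (i + 1) j = insert (p.newStrand i) (p.colorClass i j) :=
      (colorClass_succ_subset hi j).antisymm
        (Set.insert_subset hnew (colorClass_subset_succ hi j))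
    rw [hclass]
    exact h.insert (ht.trans hnew) hadj
  · have hclass : p.colorClass (i + 1) j = p.colorClass i j :=
      ((Set.subset_insert_iff_of_notMem hnew).mp (colorClass_succ_subset hi j)).antisymm
        (colorClass_subset_succ hi j)
    rwa [hclass]

variable (p) in
theorem connectedIn_colorClass (hi : i ≤ D.n - k) (j : Fin k) :
    D.ConnectedIn (p.colorClass i j) := by
  induction i with
  | zero => exact p.colorClass_zero j ▸ connectedIn_singleton _
  | succ i ih => exact connectedIn_colorClass_succ hi (ih (Nat.le_of_succ_le hi))

end ColoringProcess

end LinkDiagram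

/-- If `D` is `k`-meridionally colorable via a coloring process `p`,
then at every stage `δ ≤ n - k` and for every color `j`, the set of strands carrying
color `j` at stage `δ` is connected under the adjacency relation. -/
theorem wirtinger_colorClass_connected (D : LinkDiagram) (k : ℕ)
    (p : LinkDiagram.ColoringProcess D k) (j : Fin k) (δ : ℕ) (hδ : δ ≤ D.n - k) :
    D.ConnectedIn {s : D.Strand | p.f δ s = some j} :=
  p.connectedIn_colorClass hδ j
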